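/- arXiv:1805.00387 — 6 statements merged into one kernel-verified Lean document; each statement's English description precedes it below -/
import Mathlib

section
/- For b, β > 0 and a constant K > 0, the equation W + b = 2b/(1 + e^{-4bβW}) in the variable W ∈ (-b, b), equivalently K·(P - P*) + b = 2b/(1 + e^{-4bβK(P - P*)}), has W = 0 as its unique solution in (-b, b) if and only if 2b²β ≤ 1; if 2b²β > 1 it has exactly three solutions W^L < 0 < W^H in (-b, b). -/
open Set

/-!
On `(-b, b)` the equation `W + b = 2b / (1 + e^{-4bβW})` is equivalent to the vanishing of the
odd function `ψ(W) = log (b + W) - log (b - W) - 4bβW` (`pitchforkDefect b β`), whose derivative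
`2b / (b² - W²) - 4bβ` is positive exactly where `2β (b² - W²) < 1`. If `2b²β ≤ 1` then `ψ` increases on `[0, b)`, so `0` is
its only zero. If `2b²β > 1` then `ψ` decreases on `[0, r]` and increases on `[r, b)`, where
`r = √(b² - 1/(2β))`; since `ψ → +∞` at `b`, it has exactly one zero in `(0, b)`, and oddness
reflects it to `(-b, 0)`.
-/

section OddZeros

variable {f : ℝ → ℝ} {b : ℝ}

lemma mem_zeroSet_iff_of_odd (hf : Function.Odd f) (hb : 0 < b) (x : ℝ) :
    (x ∈ Ioo (-b) b ∧ f x = 0) ↔ x = 0 ∨ (|x| ∈ Ioo 0 b ∧ f |x| = 0) := by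
  rcases lt_trichotomy x 0 with hx | rfl | hx
  · rw [abs_of_neg hx, hf.eq]
    constructor
    · rintro ⟨⟨hbx, -⟩, hfx⟩
      exact Or.inr ⟨⟨by linarith, by linarith⟩, by rw [hfx, neg_zero]⟩
    · rintro (h | ⟨⟨-, hxb⟩, hfx⟩)
      · exact absurd h hx.ne
      · exact ⟨⟨by linarith, by linarith⟩, neg_eq_zero.mp hfx⟩
  · simp [hb, hf.map_zero]
  · rw [abs_of_pos hx]
    simp [hx, hx.ne', hx.trans' (neg_lt_zero.mpr hb)]

lemma setOf_zero_eq_singleton_of_odd (hf : Function.Odd f) (hb : 0 < b)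
    (hpos : ∀ x ∈ Ioo 0 b, f x ≠ 0) : {x | x ∈ Ioo (-b) b ∧ f x = 0} = {0} := by
  ext x
  rw [mem_ofPred_eq, mem_zeroSet_iff_of_odd hf hb, mem_singleton_iff, or_iff_left_iff_imp]
  exact fun ⟨hx, hfx⟩ => absurd hfx (hpos _ hx)

lemma setOf_zero_eq_triple_of_odd (hf : Function.Odd f) {w : ℝ} (hw : w ∈ Ioo 0 b)
    (huniq : ∀ x, x ∈ Ioo 0 b ∧ f x = 0 ↔ x = w) :
    {x | x ∈ Ioo (-b) b ∧ f x = 0} = {-w, 0, w} := by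
  ext x
  rw [mem_ofPred_eq, mem_zeroSet_iff_of_odd hf (hw.1.trans hw.2), huniq, abs_eq hw.1.le]
  simp only [mem_insert_iff, mem_singleton_iff]
  tauto

end OddZeros

lemma existsUnique_zero_of_strictAntiOn_of_strictMonoOn {f : ℝ → ℝ} {r b s : ℝ} (hr : 0 < r)
    (hf0 : f 0 = 0) (hcont : ContinuousOn f (Ico 0 b)) (hanti : StrictAntiOn f (Icc 0 r))
    (hmono : StrictMonoOn f (Ico r b)) (hs : s ∈ Ioo 0 b) (hfs : 0 < f s) :
    ∃! x, x ∈ Ioo 0 b ∧ f x = 0 := by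
  have hneg : ∀ x, 0 < x → x ≤ r → f x < 0 := fun x hx hxr =>
    hf0 ▸ hanti ⟨le_rfl, hr.le⟩ ⟨hx.le, hxr⟩ hx
  have hrs : r < s := lt_of_not_ge fun h => (hneg s hs.1 h).not_gt hfs
  obtain ⟨w, hw, hfw⟩ := intermediate_value_Icc hrs.le
    (hcont.mono fun x hx => ⟨hr.le.trans hx.1, hx.2.trans_lt hs.2⟩)
    ⟨(hneg r hr le_rfl).le, hfs.le⟩
  have hwb : w < b := hw.2.trans_lt hs.2
  refine ⟨w, ⟨⟨hr.trans_le hw.1, hwb⟩, hfw⟩, fun x ⟨hx, hfx⟩ => ?_⟩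
  have hrx : r ≤ x := le_of_not_gt fun h => (hneg x hx.1 h.le).ne hfx
  exact hmono.injOn ⟨hrx, hx.2⟩ ⟨hw.1, hwb⟩ (hfx.trans hfw.symm)

noncomputable def pitchforkDefect (b β W : ℝ) : ℝ :=
  Real.log (b + W) - Real.log (b - W) - 4 * b * β * W

section PitchforkDefect

variable {b β W : ℝ}

lemma pitchforkDefect_odd (b β : ℝ) : Function.Odd (pitchforkDefect b β) := by
  intro W
  simp only [pitchforkDefect, ← sub_eq_add_neg, sub_neg_eq_add]
  ring

lemma hasDerivAt_pitchforkDefect (hW : W ∈ Ioo (-b) b) :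
    HasDerivAt (pitchforkDefect b β) (2 * b / (b ^ 2 - W ^ 2) - 4 * b * β) W := by
  have hplus : b + W ≠ 0 := by linarith [hW.1]
  have hminus : b - W ≠ 0 := by linarith [hW.2]
  have h := ((((hasDerivAt_id W).const_add b).log hplus).sub
    (((hasDerivAt_id W).const_sub b).log hminus)).sub ((hasDerivAt_id W).const_mul (4 * b * β))
  refine h.congr_deriv ?_
  have hsq : b ^ 2 - W ^ 2 = (b + W) * (b - W) := by ring
  rw [hsq, id]
  field_simp
  ring

lemma continuousOn_pitchforkDefect : ContinuousOn (pitchforkDefect b β) (Ioo (-b) b) :=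
  fun _ hW => (hasDerivAt_pitchforkDefect hW).continuousAt.continuousWithinAt

lemma eq_div_iff_pitchforkDefect_eq_zero (hW : W ∈ Ioo (-b) b) :
    W + b = 2 * b / (1 + Real.exp (-(4 * b * β * W))) ↔ pitchforkDefect b β W = 0 := by
  have hplus : 0 < b + W := by linarith [hW.1]
  have hminus : 0 < b - W := by linarith [hW.2]
  have hE := Real.exp_pos (-(4 * b * β * W))
  calc W + b = 2 * b / (1 + Real.exp (-(4 * b * β * W)))
      ↔ Real.exp (-(4 * b * β * W)) = Real.exp (Real.log ((b - W) / (b + W))) := by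
        rw [eq_div_iff (by positivity), Real.exp_log (by positivity), eq_div_iff hplus.ne']
        constructor <;> intro h <;> linarith
    _ ↔ pitchforkDefect b β W = 0 := by
        rw [Real.exp_eq_exp, Real.log_div hminus.ne' hplus.ne', pitchforkDefect]
        constructor <;> intro h <;> linarith

lemma strictMonoOn_pitchforkDefect {r : ℝ} (hβ : 0 < β) (hr : 0 ≤ r)
    (h : 2 * β * (b ^ 2 - r ^ 2) ≤ 1) : StrictMonoOn (pitchforkDefect b β) (Ico r b) := by
  refine strictMonoOn_of_deriv_pos (convex_Ico r b)
    (continuousOn_pitchforkDefect.mono fun x hx => ⟨by linarith [hx.1, hx.2], hx.2⟩) ?_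
  intro x hx
  rw [interior_Ico] at hx
  have hxb : 0 < b ^ 2 - x ^ 2 := by nlinarith [hx.1, hx.2]
  rw [(hasDerivAt_pitchforkDefect ⟨by linarith [hx.1, hx.2], hx.2⟩).deriv, sub_pos,
    lt_div_iff₀ hxb]
  have hb : 0 < b := by linarith [hx.1, hx.2]
  have hsq : r ^ 2 < x ^ 2 := by nlinarith [hx.1]
  have : 2 * β * (b ^ 2 - x ^ 2) < 1 := by nlinarith [mul_lt_mul_of_pos_left hsq hβ]
  nlinarith

lemma strictAntiOn_pitchforkDefect {r : ℝ} (hβ : 0 < β) (hrb : r < b)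
    (h : 1 ≤ 2 * β * (b ^ 2 - r ^ 2)) : StrictAntiOn (pitchforkDefect b β) (Icc 0 r) := by
  refine strictAntiOn_of_deriv_neg (convex_Icc 0 r)
    (continuousOn_pitchforkDefect.mono fun x hx => ⟨by linarith [hx.1, hx.2], by linarith [hx.2]⟩) ?_
  intro x hx
  rw [interior_Icc] at hx
  have hxb : 0 < b ^ 2 - x ^ 2 := by nlinarith [hx.1, hx.2]
  rw [(hasDerivAt_pitchforkDefect ⟨by linarith [hx.1, hx.2], by linarith [hx.2]⟩).deriv, sub_neg,
    div_lt_iff₀ hxb]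
  have hb : 0 < b := by linarith [hx.1, hx.2]
  have hsq : x ^ 2 < r ^ 2 := by nlinarith [hx.1, hx.2]
  have : 1 < 2 * β * (b ^ 2 - x ^ 2) := by nlinarith [mul_lt_mul_of_pos_left hsq hβ]
  nlinarith

lemma exists_pitchforkDefect_pos (hb : 0 < b) (hβ : 0 ≤ β) :
    ∃ s ∈ Ioo 0 b, 0 < pitchforkDefect b β s := by
  set ε := b / 2 * Real.exp (-(4 * b * β * b))
  have hε : 0 < ε := by positivity
  have hεb : ε ≤ b / 2 := mul_le_of_le_one_right (by positivity)
    (Real.exp_le_one_iff.mpr (by nlinarith [mul_nonneg hb.le hβ]))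
  refine ⟨b - ε, ⟨by linarith, by linarith⟩, ?_⟩
  have hlog : Real.log (b - (b - ε)) = Real.log (b / 2) - 4 * b * β * b := by
    rw [sub_sub_cancel, Real.log_mul (by positivity) (Real.exp_pos _).ne', Real.log_exp]
    ring
  have hlt : Real.log (b / 2) < Real.log (b + (b - ε)) := Real.log_lt_log (by positivity) (by linarith)
  rw [pitchforkDefect, hlog]
  nlinarith [mul_nonneg (mul_nonneg hb.le hβ) hε.le]

lemma pitchforkDefect_pos (hβ : 0 < β) (h : 2 * b ^ 2 * β ≤ 1) (hW : W ∈ Ioo 0 b) :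
    0 < pitchforkDefect b β W := by
  have hmono := strictMonoOn_pitchforkDefect hβ le_rfl (by linarith : 2 * β * (b ^ 2 - 0 ^ 2) ≤ 1)
  simpa [(pitchforkDefect_odd b β).map_zero] using
    hmono ⟨le_rfl, hW.1.trans hW.2⟩ ⟨hW.1.le, hW.2⟩ hW.1

lemma existsUnique_pitchforkDefect_eq_zero (hb : 0 < b) (hβ : 0 < β) (h : 1 < 2 * b ^ 2 * β) :
    ∃! W, W ∈ Ioo 0 b ∧ pitchforkDefect b β W = 0 := by
  -- the zero of the derivative `2b / (b² - W²) - 4bβ`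
  set r := √(b ^ 2 - 1 / (2 * β))
  have hrad : 0 < b ^ 2 - 1 / (2 * β) := by
    rw [sub_pos, div_lt_iff₀ (by positivity)]
    linarith
  have hr : 0 < r := Real.sqrt_pos.mpr hrad
  have hcrit : 2 * β * (b ^ 2 - r ^ 2) = 1 := by
    rw [Real.sq_sqrt hrad.le]
    field_simp
    ring
  have hrb : r < b := lt_of_pow_lt_pow_left₀ 2 hb.le (by nlinarith)
  obtain ⟨s, hs, hfs⟩ := exists_pitchforkDefect_pos hb hβ.le
  exact existsUnique_zero_of_strictAntiOn_of_strictMonoOn hr (pitchforkDefect_odd b β).map_zero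
    (continuousOn_pitchforkDefect.mono fun x hx => ⟨by linarith [hx.1], hx.2⟩)
    (strictAntiOn_pitchforkDefect hβ hrb hcrit.ge) (strictMonoOn_pitchforkDefect hβ hr.le hcrit.le)
    hs hfs

end PitchforkDefect

theorem pitchfork_solutions (b β : ℝ) (hb : 0 < b) (hβ : 0 < β) :
    (({W : ℝ | W ∈ Ioo (-b) b ∧ W + b = 2 * b / (1 + Real.exp (-(4 * b * β * W)))}
        = {0}) ↔ 2 * b ^ 2 * β ≤ 1) ∧
    (2 * b ^ 2 * β > 1 →
      ∃ WL WH : ℝ, WL < 0 ∧ 0 < WH ∧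
        {W : ℝ | W ∈ Ioo (-b) b ∧ W + b = 2 * b / (1 + Real.exp (-(4 * b * β * W)))}
          = {WL, 0, WH}) := by
  have hset : {W : ℝ | W ∈ Ioo (-b) b ∧ W + b = 2 * b / (1 + Real.exp (-(4 * b * β * W)))} =
      {W | W ∈ Ioo (-b) b ∧ pitchforkDefect b β W = 0} := by
    ext W
    exact and_congr_right eq_div_iff_pitchforkDefect_eq_zero
  have hodd := pitchforkDefect_odd b β
  have htriple_of_gt : 2 * b ^ 2 * β > 1 → ∃ WL WH : ℝ, WL < 0 ∧ 0 < WH ∧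
      {W | W ∈ Ioo (-b) b ∧ pitchforkDefect b β W = 0} = {WL, 0, WH} := by
    intro h
    obtain ⟨w, hw, huniq⟩ := existsUnique_pitchforkDefect_eq_zero hb hβ h
    exact ⟨-w, w, neg_neg_iff_pos.mpr hw.1.1, hw.1.1, setOf_zero_eq_triple_of_odd hodd hw.1
      fun x => ⟨huniq x, fun hx => hx ▸ hw⟩⟩
  rw [hset]
  refine ⟨⟨fun hzero => le_of_not_gt fun h => ?_, fun h => ?_⟩, htriple_of_gt⟩
  · obtain ⟨WL, WH, -, hWH, htriple⟩ := htriple_of_gt h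
    have : WH ∈ ({0} : Set ℝ) := hzero ▸ htriple ▸ by simp
    exact hWH.ne' this
  · exact setOf_zero_eq_singleton_of_odd hodd hb fun x hx => (pitchforkDefect_pos hβ h hx).ne'
end

section
/- For fixed b > 0, the positive solution W^H(β) ∈ (0, b) of e^{-4bβW} = (b - W)/(b + W) is strictly increasing in β on (1/(2b²), +∞), and W^H(β) → b as β → +∞. -/
open Set Filter

/-!
Taking logarithms, the defining equation reads `4 b β = g(W) / W` with
`g t = log (b + t) - log (b - t)`. Since `g` is strictly convex on `[0, b)` and `g 0 = 0`,
the secant slope `g t / t` is strictly increasing on `(0, b)`, so `W` increases with `β`.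
For the limit, `b - W = (b + W) e^{-4bβW} ≤ 2b e^{-4bβW₀}` once `W ≥ W₀ > 0`.
-/

theorem StrictConvexOn.strictMonoOn_div_self {s : Set ℝ} {f : ℝ → ℝ}
    (hf : StrictConvexOn ℝ s f) (h0 : (0 : ℝ) ∈ s) (hf0 : f 0 = 0) :
    StrictMonoOn (fun t => f t / t) (s \ {0}) := by
  intro x hx y hy hxy
  simpa [hf0] using hf.secant_strict_mono h0 hx.1 hy.1 hx.2 hy.2 hxy

namespace Real

theorem hasDerivAt_log_add_sub_log_sub {b t : ℝ} (ht : t ∈ Ioo (-b) b) :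
    HasDerivAt (fun s => log (b + s) - log (b - s)) (2 * b / (b ^ 2 - t ^ 2)) t := by
  have hp : 0 < b + t := by linarith [ht.1]
  have hm : 0 < b - t := by linarith [ht.2]
  have hderiv := (((hasDerivAt_id t).const_add b).log hp.ne').sub
    (((hasDerivAt_id t).const_sub b).log hm.ne')
  have hsum : 2 * b / (b ^ 2 - t ^ 2) = 1 / (b + t) - -1 / (b - t) := by
    rw [show b ^ 2 - t ^ 2 = (b + t) * (b - t) by ring]
    field_simp
    ring
  rw [hsum]
  exact hderiv

theorem strictConvexOn_log_add_sub_log_sub {b : ℝ} (hb : 0 < b) :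
    StrictConvexOn ℝ (Ico 0 b) (fun t => log (b + t) - log (b - t)) := by
  refine StrictMonoOn.strictConvexOn_of_deriv (convex_Ico 0 b) ?_ ?_
  · refine ContinuousOn.sub ?_ ?_ <;> refine ContinuousOn.log (by fun_prop) fun t ht => ?_
    · linarith [ht.1]
    · linarith [ht.2]
  · rw [interior_Ico]
    intro u hu v hv huv
    have hderiv : ∀ t ∈ Ioo 0 b,
        deriv (fun s => log (b + s) - log (b - s)) t = 2 * b / (b ^ 2 - t ^ 2) := fun t ht =>
      (hasDerivAt_log_add_sub_log_sub ⟨by linarith [ht.1], ht.2⟩).deriv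
    rw [hderiv u hu, hderiv v hv]
    apply div_lt_div_of_pos_left (by positivity) <;> nlinarith [hu.1, hv.2]

end Real

section Equation

open Real

variable {b β W : ℝ}

theorem mul_eq_log_div_of_exp_eq (hW : W ∈ Ioo 0 b)
    (h : exp (-(4 * b * β * W)) = (b - W) / (b + W)) :
    4 * b * β = (log (b + W) - log (b - W)) / W := by
  have hlog := congrArg log h
  rw [log_exp, log_div (sub_pos.mpr hW.2).ne' (by linarith [hW.1, hW.2] : 0 < b + W).ne'] at hlog
  field_simp [hW.1.ne']
  linarith

theorem sub_le_of_exp_eq {W₀ : ℝ} (hβ : 0 ≤ β) (hW₀ : W₀ ≤ W) (hW : W ∈ Ioo 0 b)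
    (h : exp (-(4 * b * β * W)) = (b - W) / (b + W)) :
    b - W ≤ 2 * b * exp (-(4 * b * W₀ * β)) := by
  have hb : 0 < b := hW.1.trans hW.2
  have hbW : 0 < b + W := by linarith [hW.1]
  have hdecay : exp (-(4 * b * β * W)) ≤ exp (-(4 * b * W₀ * β)) :=
    exp_le_exp.mpr (by nlinarith [mul_nonneg hb.le hβ])
  calc b - W = (b + W) * exp (-(4 * b * β * W)) := by rw [h]; field_simp
    _ ≤ 2 * b * exp (-(4 * b * W₀ * β)) := by
      gcongr
      linarith [hW.2]

theorem tendsto_of_eventually_exp_eq {W : ℝ → ℝ} {W₀ : ℝ} (hb : 0 < b) (hW₀ : 0 < W₀)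
    (hW : ∀ᶠ β in atTop, W₀ ≤ W β ∧ W β ∈ Ioo 0 b ∧
      exp (-(4 * b * β * W β)) = (b - W β) / (b + W β)) :
    Tendsto W atTop (nhds b) := by
  have hdecay : Tendsto (fun β => b - 2 * b * exp (-(4 * b * W₀ * β))) atTop (nhds b) := by
    simpa using tendsto_const_nhds.sub <|
      (tendsto_exp_atBot.comp (tendsto_neg_atTop_atBot.comp
        (tendsto_id.const_mul_atTop (by positivity)))).const_mul (2 * b)
  refine tendsto_of_tendsto_of_tendsto_of_le_of_le' hdecay tendsto_const_nhds ?_ ?_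
  · filter_upwards [hW, eventually_ge_atTop 0] with β ⟨hle, hmem, heq⟩ hβ
    linarith [sub_le_of_exp_eq hβ hle hmem heq]
  · filter_upwards [hW] with β ⟨_, hmem, _⟩
    exact hmem.2.le

end Equation

theorem WH_monotone_in_beta (b : ℝ) (hb : 0 < b) (WH : ℝ → ℝ)
    (hWH : ∀ β : ℝ, 1 / (2 * b ^ 2) < β →
      WH β ∈ Ioo 0 b ∧
      Real.exp (-(4 * b * β * WH β)) = (b - WH β) / (b + WH β)) :
    StrictMonoOn WH (Ioi (1 / (2 * b ^ 2))) ∧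
    Tendsto WH atTop (nhds b) := by
  have hslope := (Real.strictConvexOn_log_add_sub_log_sub hb).strictMonoOn_div_self
    (left_mem_Ico.mpr hb) (by simp)
  have hmem : ∀ β ∈ Ioi (1 / (2 * b ^ 2)), WH β ∈ Ico 0 b \ {0} := fun β hβ =>
    ⟨Ioo_subset_Ico_self (hWH β hβ).1, (hWH β hβ).1.1.ne'⟩
  have hmono : StrictMonoOn WH (Ioi (1 / (2 * b ^ 2))) := by
    intro β₁ hβ₁ β₂ hβ₂ hlt
    refine (hslope.lt_iff_lt (hmem β₁ hβ₁) (hmem β₂ hβ₂)).mp ?_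
    rw [← mul_eq_log_div_of_exp_eq (hWH β₁ hβ₁).1 (hWH β₁ hβ₁).2,
      ← mul_eq_log_div_of_exp_eq (hWH β₂ hβ₂).1 (hWH β₂ hβ₂).2]
    gcongr
  refine ⟨hmono, ?_⟩
  set β₀ := 1 / (2 * b ^ 2) + 1
  have hβ₀ : β₀ ∈ Ioi (1 / (2 * b ^ 2)) := lt_add_one (1 / (2 * b ^ 2))
  refine tendsto_of_eventually_exp_eq hb (hWH β₀ hβ₀).1.1 ?_
  filter_upwards [eventually_gt_atTop β₀] with β hβ
  have hβ' : β ∈ Ioi (1 / (2 * b ^ 2)) := hβ₀.out.trans hβ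
  exact ⟨(hmono hβ₀ hβ' hβ).le, hWH β hβ'⟩
end

section
/- For fixed b > 0, the negative solution W^L(β) ∈ (-b, 0) of e^{-4bβW} = (b - W)/(b + W) is strictly decreasing in β on (1/(2b²), +∞), and W^L(β) → -b as β → +∞. -/
/-! With `t = -W / b ∈ (0, 1)` the equation becomes `(log (1 + t) - log (1 - t)) / t = 4 b² β`.
The left side is `∑ 2 t^(2k) / (2k + 1)`, strictly increasing on `(0, 1)`, so `t` increases
strictly with `β`, and since the right side tends to `∞`, `t` tends to `1`, i.e. `W` to `-b`. -/

open Set Filter Topology Real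

theorem hasSum_log_sub_log_div_self {t : ℝ} (ht₀ : t ≠ 0) (ht : |t| < 1) :
    HasSum (fun k : ℕ => 2 / (2 * k + 1) * t ^ (2 * k)) ((log (1 + t) - log (1 - t)) / t) := by
  have hterm (k : ℕ) :
      2 * (1 / (2 * k + 1)) * t ^ (2 * k + 1) / t = 2 / (2 * k + 1) * t ^ (2 * k) := by
    rw [pow_succ]
    field_simp
  simpa only [hterm] using (hasSum_log_sub_log_of_abs_lt_one ht).div_const t

theorem strictMonoOn_log_sub_log_div_self :
    StrictMonoOn (fun t : ℝ => (log (1 + t) - log (1 - t)) / t) (Ioo 0 1) := by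
  intro s ⟨hs₀, _⟩ t ⟨_, ht₁⟩ hst
  have ht₀ : 0 < t := hs₀.trans hst
  have hs := hasSum_log_sub_log_div_self hs₀.ne' (by rwa [abs_of_pos hs₀])
  have ht := hasSum_log_sub_log_div_self ht₀.ne' (by rwa [abs_of_pos ht₀])
  refine hasSum_lt (i := 1) (fun k => ?_) ?_ hs ht
  · gcongr
  · norm_num
    gcongr

theorem tendsto_of_strictMonoOn_of_tendsto_atTop {α β ι : Type*} [LinearOrder α]
    [TopologicalSpace α] [OrderTopology α] [LinearOrder β] [NoMaxOrder β] {l : Filter ι}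
    {F : α → β} {t : ι → α} {a b : α} (hF : StrictMonoOn F (Ioo a b))
    (ht : ∀ᶠ x in l, t x ∈ Ioo a b) (hFt : Tendsto (F ∘ t) l atTop) :
    Tendsto t l (𝓝 b) := by
  refine tendsto_order.2 ⟨fun c hc => ?_, fun c hc => ht.mono fun x hx => hx.2.trans hc⟩
  rcases le_or_gt c a with hca | hac
  · exact ht.mono fun x hx => hca.trans_lt hx.1
  · filter_upwards [ht, hFt.eventually_gt_atTop (F c)] with x hx hFx
    exact (hF.lt_iff_lt ⟨hac, hc⟩ hx).1 hFx

theorem neg_div_mem_Ioo_zero_one {b W : ℝ} (hb : 0 < b) (hW : W ∈ Ioo (-b) 0) :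
    -W / b ∈ Ioo 0 1 :=
  ⟨div_pos (neg_pos.2 hW.2) hb, (div_lt_one hb).2 (neg_lt.1 hW.1)⟩

theorem log_sub_log_div_self_eq_of_exp_eq {b β W : ℝ} (hb : 0 < b) (hW : W ∈ Ioo (-b) 0)
    (heq : exp (-(4 * b * β * W)) = (b - W) / (b + W)) :
    (log (1 + -W / b) - log (1 - -W / b)) / (-W / b) = 4 * b ^ 2 * β := by
  obtain ⟨ht₀, ht₁⟩ := neg_div_mem_Ioo_zero_one hb hW
  have hratio : (1 + -W / b) / (1 - -W / b) = (b - W) / (b + W) := by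
    field_simp
    ring
  rw [← log_div (by linarith) (by linarith), hratio, ← heq, log_exp]
  field_simp [hW.2.ne]

theorem WL_antitone_in_beta (b : ℝ) (hb : 0 < b) (WL : ℝ → ℝ)
    (hWL : ∀ β : ℝ, 1 / (2 * b ^ 2) < β →
      WL β ∈ Ioo (-b) 0 ∧
      Real.exp (-(4 * b * β * WL β)) = (b - WL β) / (b + WL β)) :
    StrictAntiOn WL (Ioi (1 / (2 * b ^ 2))) ∧
    Tendsto WL atTop (nhds (-b)) := by
  have hmem (β : ℝ) (hβ : 1 / (2 * b ^ 2) < β) : -WL β / b ∈ Ioo 0 1 :=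
    neg_div_mem_Ioo_zero_one hb (hWL β hβ).1
  have hF (β : ℝ) (hβ : 1 / (2 * b ^ 2) < β) :
      (log (1 + -WL β / b) - log (1 - -WL β / b)) / (-WL β / b) = 4 * b ^ 2 * β :=
    log_sub_log_div_self_eq_of_exp_eq hb (hWL β hβ).1 (hWL β hβ).2
  constructor
  · intro β₁ h₁ β₂ h₂ hlt
    have ht : -WL β₁ / b < -WL β₂ / b := by
      rw [← strictMonoOn_log_sub_log_div_self.lt_iff_lt (hmem β₁ h₁) (hmem β₂ h₂), hF β₁ h₁,
        hF β₂ h₂]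
      gcongr
    rwa [div_lt_div_iff_of_pos_right hb, neg_lt_neg_iff] at ht
  · have hdom : ∀ᶠ β in atTop, 1 / (2 * b ^ 2) < β := eventually_gt_atTop _
    have ht : Tendsto (fun β => -WL β / b) atTop (𝓝 1) :=
      tendsto_of_strictMonoOn_of_tendsto_atTop strictMonoOn_log_sub_log_div_self
        (hdom.mono hmem) <|
        (tendsto_id.const_mul_atTop (by positivity : (0 : ℝ) < 4 * b ^ 2)).congr'
          (hdom.mono fun β hβ => (hF β hβ).symm)
    convert ht.const_mul (-b) using 2 with β
    · field_simp
    · ring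
end

section
/- For 0 < b₁ < b₂ with 2b₁²β > 1 and 2b₂²β > 1, the positive solutions W^H(b₁) ∈ (0, b₁) and W^H(b₂) ∈ (0, b₂) of e^{-4bβW} = (b - W)/(b + W) satisfy W^H(b₁) < W^H(b₂). -/
/-!
With `u = W / b ∈ (0, 1)` the equation `e^{-4bβW} = (b - W)/(b + W)` reads `artanh u / u = 2b²β`.
Since `artanh` is strictly convex on `[0, 1)` and vanishes at `0`, its secant slope `artanh u / u`
is strictly increasing, so `b₁ < b₂` forces `W₁ / b₁ < W₂ / b₂`, and then `W₁ < W₂`.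
-/

open Set Real

theorem hasDerivAt_artanh {x : ℝ} (hx : x ∈ Ioo (-1) 1) :
    HasDerivAt artanh (1 - x ^ 2)⁻¹ x := by
  have hp : 0 < 1 + x := by linarith [hx.1]
  have hm : 0 < 1 - x := by linarith [hx.2]
  have hlog : HasDerivAt (fun y ↦ 1 / 2 * (log (1 + y) - log (1 - y)))
      (1 / 2 * (1 / (1 + x) - -1 / (1 - x))) x :=
    ((((hasDerivAt_id x).const_add 1).log hp.ne').sub
      (((hasDerivAt_id x).const_sub 1).log hm.ne')).const_mul (1 / 2)
  have hEq : (fun y ↦ 1 / 2 * (log (1 + y) - log (1 - y))) =ᶠ[nhds x] artanh := by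
    filter_upwards [isOpen_Ioo.mem_nhds hx] with y hy
    rw [artanh_eq_half_log (Ioo_subset_Icc_self hy),
      log_div (by linarith [hy.1]) (by linarith [hy.2])]
  have hsq : 1 - x ^ 2 = (1 + x) * (1 - x) := by ring
  refine (hlog.congr_of_eventuallyEq hEq.symm).congr_deriv ?_
  rw [hsq]
  field_simp
  ring

theorem strictConvexOn_artanh : StrictConvexOn ℝ (Ico 0 1) artanh := by
  have hsub : Ico (0 : ℝ) 1 ⊆ Ioo (-1) 1 := fun x hx ↦ ⟨by linarith [hx.1], hx.2⟩
  refine StrictMonoOn.strictConvexOn_of_deriv (convex_Ico 0 1)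
    (fun x hx ↦ (hasDerivAt_artanh (hsub hx)).continuousAt.continuousWithinAt) ?_
  rw [interior_Ico]
  intro x hx y hy hxy
  rw [(hasDerivAt_artanh (hsub (Ioo_subset_Ico_self hx))).deriv,
    (hasDerivAt_artanh (hsub (Ioo_subset_Ico_self hy))).deriv]
  have : 0 < 1 - y ^ 2 := by nlinarith [hy.1, hy.2]
  gcongr
  nlinarith [hx.1]

theorem strictMonoOn_artanh_div_self :
    StrictMonoOn (fun x ↦ artanh x / x) (Ioo 0 1) := by
  intro x hx y hy hxy
  simpa using strictConvexOn_artanh.secant_strict_mono (a := 0) ⟨le_rfl, one_pos⟩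
    (Ioo_subset_Ico_self hx) (Ioo_subset_Ico_self hy) hx.1.ne' hy.1.ne' hxy

theorem artanh_div_self_eq_of_exp_eq {β b W : ℝ} (hW : W ∈ Ioo 0 b)
    (hsol : exp (-(4 * b * β * W)) = (b - W) / (b + W)) :
    artanh (W / b) / (W / b) = 2 * b ^ 2 * β := by
  obtain ⟨hW₀, hWb⟩ := hW
  have hb : 0 < b := hW₀.trans hWb
  have hu : W / b ∈ Icc (-1) 1 :=
    ⟨by linarith [div_pos hW₀ hb], (div_le_one hb).mpr hWb.le⟩
  have hratio : (1 + W / b) / (1 - W / b) = ((b - W) / (b + W))⁻¹ := by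
    field_simp
  rw [artanh_eq_half_log hu, hratio, ← hsol, log_inv, log_exp]
  field_simp
  ring

theorem WH_monotone_in_b_general (β b₁ b₂ : ℝ) (hβ : 0 < β) (hb₁ : 0 < b₁) (h12 : b₁ < b₂)
    (W₁ W₂ : ℝ)
    (hW₁ : W₁ ∈ Ioo 0 b₁)
    (hW₂ : W₂ ∈ Ioo 0 b₂)
    (hsol₁ : Real.exp (-(4 * b₁ * β * W₁)) = (b₁ - W₁) / (b₁ + W₁))
    (hsol₂ : Real.exp (-(4 * b₂ * β * W₂)) = (b₂ - W₂) / (b₂ + W₂)) :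
    W₁ < W₂ := by
  have hb₂ : 0 < b₂ := hb₁.trans h12
  have hu₁ : W₁ / b₁ ∈ Ioo 0 1 := ⟨div_pos hW₁.1 hb₁, (div_lt_one hb₁).mpr hW₁.2⟩
  have hu₂ : W₂ / b₂ ∈ Ioo 0 1 := ⟨div_pos hW₂.1 hb₂, (div_lt_one hb₂).mpr hW₂.2⟩
  have hslope : artanh (W₁ / b₁) / (W₁ / b₁) < artanh (W₂ / b₂) / (W₂ / b₂) := by
    rw [artanh_div_self_eq_of_exp_eq hW₁ hsol₁, artanh_div_self_eq_of_exp_eq hW₂ hsol₂]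
    gcongr
  have hu : W₁ / b₁ < W₂ / b₂ := (strictMonoOn_artanh_div_self.lt_iff_lt hu₁ hu₂).mp hslope
  calc W₁ = b₁ * (W₁ / b₁) := by field_simp
    _ < b₂ * (W₂ / b₂) := mul_lt_mul'' h12 hu hb₁.le hu₁.1.le
    _ = W₂ := by field_simp

theorem WH_monotone_in_b (β b₁ b₂ : ℝ) (hβ : 0 < β) (hb₁ : 0 < b₁) (h12 : b₁ < b₂)
    (h1 : 2 * b₁ ^ 2 * β > 1) (h2 : 2 * b₂ ^ 2 * β > 1)
    (W₁ W₂ : ℝ)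
    (hW₁ : W₁ ∈ Ioo 0 b₁)
    (hW₂ : W₂ ∈ Ioo 0 b₂)
    (hsol₁ : Real.exp (-(4 * b₁ * β * W₁)) = (b₁ - W₁) / (b₁ + W₁))
    (hsol₂ : Real.exp (-(4 * b₂ * β * W₂)) = (b₂ - W₂) / (b₂ + W₂)) :
    W₁ < W₂ :=
  WH_monotone_in_b_general β b₁ b₂ hβ hb₁ h12 W₁ W₂ hW₁ hW₂ hsol₁ hsol₂
end

section
/- The function h(z) = (1/(4z))·ln((1+z)/(1-z))·(1 - z²) on (0,1) is strictly decreasing, with h(z) → 1/2 as z → 0⁺ and h(z) → 0 as z → 1⁻. Consequently, for each t ∈ (0, 1/2) the equation h(z) = t has a unique solution z(t) ∈ (0,1), and z(t) is strictly decreasing in t. -/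
/-!
Writing `L z = log (1 + z) - log (1 - z)`, the derivative of `h` is
`(2z - (1 + z²) L z) / (4z²)`, which is negative because `L z > 2z` (compare the power series
of `L` with its first term). Near `0`, `h z = (1 - z²)/4 · L z / z → L'(0)/4 = 1/2`; near `1`,
`h z = (1 + z)/(4z) · ((1 - z) log (1 + z) - (1 - z) log (1 - z)) → 0` since `u log u → 0`.
Existence and uniqueness of `z(t)` are then the intermediate value theorem and injectivity.
-/

open Set Filter Topology Real

noncomputable def hfun (z : ℝ) : ℝ := (1 - z ^ 2) * log ((1 + z) / (1 - z)) / (4 * z)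

lemma hasDerivAt_log_one_add_sub_log_one_sub {x : ℝ} (hx : x ∈ Ioo (-1 : ℝ) 1) :
    HasDerivAt (fun z => log (1 + z) - log (1 - z)) (2 / (1 - x ^ 2)) x := by
  obtain ⟨h₁, h₂⟩ := hx
  have hp : HasDerivAt (fun z => log (1 + z)) (1 / (1 + x)) x := by
    simpa using ((hasDerivAt_id x).const_add 1).log (by simp only [id]; linarith)
  have hm : HasDerivAt (fun z => log (1 - z)) (-1 / (1 - x)) x := by
    simpa using ((hasDerivAt_id x).const_sub 1).log (by simp only [id]; linarith)
  refine (hp.sub hm).congr_deriv ?_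
  have : 1 + x ≠ 0 := by linarith
  have : 1 - x ≠ 0 := by linarith
  rw [show (1 : ℝ) - x ^ 2 = (1 + x) * (1 - x) by ring]
  field_simp
  ring

lemma two_mul_lt_log_one_add_sub_log_one_sub {x : ℝ} (hx : x ∈ Ioo (0 : ℝ) 1) :
    2 * x < log (1 + x) - log (1 - x) := by
  have hsum := hasSum_log_sub_log_of_abs_lt_one (abs_lt.2 ⟨by linarith [hx.1], hx.2⟩)
  calc 2 * x < 2 * x + 2 / 3 * x ^ 3 := by have := pow_pos hx.1 3; linarith
    _ = ∑ k ∈ Finset.range 2, 2 * (1 / (2 * (k : ℝ) + 1)) * x ^ (2 * k + 1) := by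
      norm_num [Finset.sum_range_succ]
    _ ≤ _ := sum_le_hasSum _ (fun k _ => by have := hx.1.le; positivity) hsum

lemma hfun_eq_log_sub_log (z : ℝ) :
    hfun z = (1 - z ^ 2) * (log (1 + z) - log (1 - z)) / (4 * z) := by
  rw [hfun, show (1 : ℝ) - z ^ 2 = (1 + z) * (1 - z) by ring]
  by_cases h : (1 + z) * (1 - z) = 0
  · simp [h]
  · rw [log_div (left_ne_zero_of_mul h) (right_ne_zero_of_mul h)]

lemma hasDerivAt_hfun {x : ℝ} (hx : x ∈ Ioo (0 : ℝ) 1) :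
    HasDerivAt hfun ((2 * x - (1 + x ^ 2) * (log (1 + x) - log (1 - x))) / (4 * x ^ 2)) x := by
  obtain ⟨h₀, h₁⟩ := hx
  have hL := hasDerivAt_log_one_add_sub_log_one_sub ⟨by linarith, h₁⟩
  have hq : HasDerivAt (fun z : ℝ => 1 - z ^ 2) (-(2 * x)) x := by
    simpa using (hasDerivAt_pow 2 x).const_sub 1
  have hd : HasDerivAt (fun z : ℝ => 4 * z) 4 x := by
    simpa using (hasDerivAt_id x).const_mul (4 : ℝ)
  rw [funext hfun_eq_log_sub_log]
  refine ((hq.mul hL).div hd (by positivity)).congr_deriv ?_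
  have : 1 - x ^ 2 ≠ 0 := by nlinarith
  simp only [Pi.mul_apply]
  field_simp
  ring

lemma continuousOn_hfun : ContinuousOn hfun (Ioo 0 1) :=
  fun _ hx => (hasDerivAt_hfun hx).continuousAt.continuousWithinAt

lemma strictAntiOn_hfun : StrictAntiOn hfun (Ioo 0 1) := by
  refine strictAntiOn_of_hasDerivWithinAt_neg (convex_Ioo 0 1) continuousOn_hfun
    (fun x hx => (hasDerivAt_hfun (by rwa [interior_Ioo] at hx)).hasDerivWithinAt) fun x hx => ?_
  rw [interior_Ioo] at hx
  have hL := two_mul_lt_log_one_add_sub_log_one_sub hx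
  have hx₀ := hx.1
  exact div_neg_of_neg_of_pos (by nlinarith) (by positivity)

lemma tendsto_hfun_zero : Tendsto hfun (𝓝[>] 0) (𝓝 (1 / 2)) := by
  have hL := (hasDerivAt_log_one_add_sub_log_one_sub (x := 0)
    (by norm_num)).tendsto_slope_zero_right
  have hq : Tendsto (fun z : ℝ => (1 - z ^ 2) / 4) (𝓝[>] 0) (𝓝 ((1 - 0 ^ 2) / 4)) :=
    ((Continuous.tendsto (by fun_prop) 0)).mono_left nhdsWithin_le_nhds
  convert hq.mul hL using 1
  · funext z
    simp only [hfun_eq_log_sub_log, zero_add, add_zero, log_one, sub_zero, sub_self, smul_eq_mul]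
    ring
  · norm_num

lemma tendsto_hfun_one : Tendsto hfun (𝓝[<] 1) (𝓝 0) := by
  have hg : ContinuousAt
      (fun z => (1 + z) / (4 * z) * ((1 - z) * log (1 + z) - (1 - z) * log (1 - z))) 1 := by
    have : ContinuousAt (fun z : ℝ => (1 - z) * log (1 - z)) 1 :=
      (continuous_mul_log.comp (continuous_const.sub continuous_id)).continuousAt
    exact ((continuousAt_const.add continuousAt_id).div (by fun_prop) (by norm_num)).mul
      (((continuousAt_const.sub continuousAt_id).mul
        ((continuousAt_log (by norm_num)).comp (by fun_prop))).sub this)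
  convert hg.tendsto.mono_left nhdsWithin_le_nhds using 2
  · rw [hfun_eq_log_sub_log]
    ring
  · simp

lemma StrictAntiOn.existsUnique_eq_of_tendsto {f : ℝ → ℝ} {a b A B t : ℝ} (hab : a < b)
    (hf : StrictAntiOn f (Ioo a b)) (hfc : ContinuousOn f (Ioo a b))
    (ha : Tendsto f (𝓝[>] a) (𝓝 A)) (hb : Tendsto f (𝓝[<] b) (𝓝 B)) (ht : t ∈ Ioo B A) :
    ∃! z, z ∈ Ioo a b ∧ f z = t := by
  obtain ⟨p, hp, hpt⟩ :=
    (Eventually.and (Ioo_mem_nhdsGT hab) (ha.eventually (eventually_gt_nhds ht.2))).exists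
  obtain ⟨q, hq, hqt⟩ :=
    (Eventually.and (Ioo_mem_nhdsLT hab) (hb.eventually (eventually_lt_nhds ht.1))).exists
  have hpq : p < q := (hf.lt_iff_gt hq hp).1 (hqt.trans hpt)
  have hsub : Icc p q ⊆ Ioo a b := Icc_subset_Ioo hp.1 hq.2
  obtain ⟨z, hz, rfl⟩ := intermediate_value_Icc' hpq.le (hfc.mono hsub) ⟨hqt.le, hpt.le⟩
  exact ⟨z, ⟨hsub hz, rfl⟩, fun y hy => hf.injOn hy.1 (hsub hz) hy.2⟩

theorem h_function_properties
    (h : ℝ → ℝ)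
    (hh : ∀ z : ℝ, h z = (1 - z ^ 2) * Real.log ((1 + z) / (1 - z)) / (4 * z)) :
    StrictAntiOn h (Ioo (0 : ℝ) 1) ∧
    Tendsto h (nhdsWithin 0 (Ioi 0)) (nhds (1 / 2)) ∧
    Tendsto h (nhdsWithin 1 (Iio 1)) (nhds 0) ∧
    (∀ t ∈ Ioo (0 : ℝ) (1 / 2), ∃! z : ℝ, z ∈ Ioo (0 : ℝ) 1 ∧ h z = t) ∧
    (∀ t₁ t₂ z₁ z₂ : ℝ, t₁ ∈ Ioo (0 : ℝ) (1 / 2) → t₂ ∈ Ioo (0 : ℝ) (1 / 2) →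
      t₁ < t₂ → z₁ ∈ Ioo (0 : ℝ) 1 → z₂ ∈ Ioo (0 : ℝ) 1 →
      h z₁ = t₁ → h z₂ = t₂ → z₂ < z₁) := by
  obtain rfl : h = hfun := funext hh
  refine ⟨strictAntiOn_hfun, tendsto_hfun_zero, tendsto_hfun_one, fun t ht =>
    strictAntiOn_hfun.existsUnique_eq_of_tendsto one_pos continuousOn_hfun tendsto_hfun_zero
      tendsto_hfun_one ht, ?_⟩
  rintro t₁ t₂ z₁ z₂ - - ht hz₁ hz₂ rfl rfl
  exact (strictAntiOn_hfun.lt_iff_gt hz₁ hz₂).1 ht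
end

section
/- Fix b > 0. For each β ∈ (0, 1/(2b²)) there exists a unique β^H(β) ∈ (1/(2b²), +∞) such that β·b² = β^H·(b² - W^H(β^H)²), where W^H(β^H) ∈ (0,b) is the unique positive solution of e^{-4bβ^H W} = (b-W)/(b+W); moreover β ↦ β^H(β) is strictly decreasing, β^H(β) → +∞ as β → 0⁺, and β^H(β) → 1/(2b²) as β → (1/(2b²))⁻. -/
/-!
Put `z = W / b ∈ (0, 1)` and `L z = log (1 + z) - log (1 - z)`. The equation defining `W^H(β')`
says `β' b² = φ z` with `φ z = L z / (4 z)`, and the condition on `β^H` says `β b² = h z` with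
`h z = (1 - z²) φ z`. The power series `L z = 2 ∑ z^(2k+1) / (2k+1)` gives
`2 z < L z < 2 z / (1 - z²)`, so on `(0, 1)` the function `φ` increases strictly from `1/2` to `∞`
and `h` decreases strictly from `1/2` to `0`. Hence `β^H(β) = φ (h⁻¹ (β b²)) / b²`, which inherits
its monotonicity and its limits from those of `φ` and `h`.
-/

open Set Filter Topology Real

lemma ContinuousOn.surjOn_Ioo_of_tendsto {α β : Type*} [ConditionallyCompleteLinearOrder α]
    [TopologicalSpace α] [OrderTopology α] [DenselyOrdered α] [LinearOrder β]
    [TopologicalSpace β] [OrderTopology β] {f : α → β} {a b : α} {c d : β} (hab : a < b)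
    (hf : ContinuousOn f (Ioo a b)) (ha : Tendsto f (𝓝[>] a) (𝓝 d))
    (hb : Tendsto f (𝓝[<] b) (𝓝 c)) : SurjOn f (Ioo a b) (Ioo c d) := by
  intro y hy
  have := nhdsGT_neBot_of_exists_gt ⟨b, hab⟩
  have := nhdsLT_neBot_of_exists_lt ⟨a, hab⟩
  obtain ⟨z₁, hz₁, hfz₁⟩ :=
    ((ha.eventually (lt_mem_nhds hy.2)).and (Ioo_mem_nhdsGT hab)).exists
  obtain ⟨z₂, hz₂, hfz₂⟩ :=
    ((hb.eventually (gt_mem_nhds hy.1)).and (Ioo_mem_nhdsLT hab)).exists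
  exact (isPreconnected_Ioo.image f hf).Icc_subset (mem_image_of_mem f hfz₂)
    (mem_image_of_mem f hfz₁) ⟨hz₂.le, hz₁.le⟩

section RightInverse

variable {α β : Type*} [LinearOrder α] [LinearOrder β] {f : α → β} {g : β → α}

lemma StrictAntiOn.of_rightInvOn {s : Set α} {t : Set β} (hf : StrictAntiOn f s)
    (hg : MapsTo g t s) (hgf : RightInvOn g f t) : StrictAntiOn g t := fun x hx y hy hxy =>
  (hf.lt_iff_gt (hg hx) (hg hy)).1 (by rwa [hgf hx, hgf hy])

variable [TopologicalSpace α] [OrderTopology α] [DenselyOrdered α] [TopologicalSpace β]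
  [OrderTopology β] {a b : α} {c d : β}

lemma StrictAntiOn.tendsto_nhdsGT_of_rightInvOn [NoMinOrder α] (hf : StrictAntiOn f (Ioo a b))
    (hfab : MapsTo f (Ioo a b) (Ioo c d)) (hg : MapsTo g (Ioo c d) (Ioo a b))
    (hgf : RightInvOn g f (Ioo c d)) (hab : a < b) : Tendsto g (𝓝[>] c) (𝓝[<] b) := by
  refine (nhdsLT_basis b).tendsto_right_iff.2 fun x hx => ?_
  obtain ⟨z, hxz, hzb⟩ := exists_between (max_lt hx hab)
  have hz : z ∈ Ioo a b := ⟨(le_max_right x a).trans_lt hxz, hzb⟩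
  filter_upwards [Ioo_mem_nhdsGT (hfab hz).1] with y hy
  have hy' : y ∈ Ioo c d := ⟨hy.1, hy.2.trans (hfab hz).2⟩
  have hzy : z < g y := (hf.lt_iff_gt (hg hy') hz).1 (by rw [hgf hy']; exact hy.2)
  exact ⟨(le_max_left x a).trans_lt (hxz.trans hzy), (hg hy').2⟩

lemma StrictAntiOn.tendsto_nhdsLT_of_rightInvOn [NoMaxOrder α] (hf : StrictAntiOn f (Ioo a b))
    (hfab : MapsTo f (Ioo a b) (Ioo c d)) (hg : MapsTo g (Ioo c d) (Ioo a b))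
    (hgf : RightInvOn g f (Ioo c d)) (hab : a < b) : Tendsto g (𝓝[<] d) (𝓝[>] a) := by
  refine (nhdsGT_basis a).tendsto_right_iff.2 fun x hx => ?_
  obtain ⟨z, haz, hzx⟩ := exists_between (lt_min hx hab)
  have hz : z ∈ Ioo a b := ⟨haz, hzx.trans_le (min_le_right x b)⟩
  filter_upwards [Ioo_mem_nhdsLT (hfab hz).2] with y hy
  have hy' : y ∈ Ioo c d := ⟨(hfab hz).1.trans hy.1, hy.2⟩
  have hzy : g y < z := (hf.lt_iff_gt hz (hg hy')).1 (by rw [hgf hy']; exact hy.1)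
  exact ⟨(hg hy').1, hzy.trans (hzx.trans_le (min_le_left x b))⟩

end RightInverse

noncomputable def logRatio (z : ℝ) : ℝ := log (1 + z) - log (1 - z)

lemma two_mul_lt_logRatio {z : ℝ} (hz : z ∈ Ioo 0 1) : 2 * z < logRatio z := by
  have hzabs : |z| < 1 := abs_lt.2 ⟨by linarith [hz.1], hz.2⟩
  refine hasSum_lt (i := 1) (fun k => ?_) ?_ (hasSum_ite_eq 0 (2 * z))
    (hasSum_log_sub_log_of_abs_lt_one hzabs)
  · rcases eq_or_ne k 0 with rfl | hk
    · simp
    · simp only [if_neg hk]; have := hz.1; positivity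
  · simp only [one_ne_zero, if_false]; have := hz.1; positivity

lemma logRatio_lt {z : ℝ} (hz : z ∈ Ioo 0 1) : logRatio z < 2 * z / (1 - z ^ 2) := by
  have hzabs : |z| < 1 := abs_lt.2 ⟨by linarith [hz.1], hz.2⟩
  have hz2 : z ^ 2 < 1 := by nlinarith [hz.1, hz.2]
  have hgeom : HasSum (fun k : ℕ => 2 * z * (z ^ 2) ^ k) (2 * z / (1 - z ^ 2)) := by
    simpa [div_eq_mul_inv] using (hasSum_geometric_of_lt_one (by positivity) hz2).mul_left (2 * z)
  refine hasSum_lt (i := 1) (fun k => ?_) ?_ (hasSum_log_sub_log_of_abs_lt_one hzabs) hgeom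
  · have : 1 / (2 * (k : ℝ) + 1) ≤ 1 := by
      rw [div_le_one (by positivity)]; have := k.cast_nonneg (α := ℝ); linarith
    have hzk : 0 ≤ z ^ (2 * k + 1) := pow_nonneg hz.1.le _
    calc 2 * (1 / (2 * (k : ℝ) + 1)) * z ^ (2 * k + 1) ≤ 2 * 1 * z ^ (2 * k + 1) := by gcongr
      _ = 2 * z * (z ^ 2) ^ k := by ring
  · norm_num; nlinarith [pow_pos hz.1 3]

lemma hasDerivAt_logRatio {z : ℝ} (hz : z ∈ Ioo (-1) 1) :
    HasDerivAt logRatio (2 / (1 - z ^ 2)) z := by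
  have h1 : 1 + z ≠ 0 := by linarith [hz.1]
  have h2 : 1 - z ≠ 0 := by linarith [hz.2]
  have hd : HasDerivAt logRatio (1 / (1 + z) - -1 / (1 - z)) z :=
    (((hasDerivAt_id' z).const_add 1).log h1).sub (((hasDerivAt_id' z).const_sub 1).log h2)
  convert hd using 1
  rw [show 1 - z ^ 2 = (1 + z) * (1 - z) by ring]
  field_simp
  ring

-- `scaledBetaH` is `φ` and `scaledBeta` is `h`.
noncomputable def scaledBetaH (z : ℝ) : ℝ := logRatio z / (4 * z)

noncomputable def scaledBeta (z : ℝ) : ℝ := (1 - z ^ 2) * scaledBetaH z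

lemma hasDerivAt_scaledBetaH {z : ℝ} (hz : z ∈ Ioo 0 1) :
    HasDerivAt scaledBetaH ((2 * z / (1 - z ^ 2) - logRatio z) / (4 * z ^ 2)) z := by
  have hz0 : z ≠ 0 := hz.1.ne'
  have hd := (hasDerivAt_logRatio ⟨by linarith [hz.1], hz.2⟩).div
    ((hasDerivAt_id' z).const_mul 4) (by positivity)
  refine hd.congr_deriv ?_
  field_simp

lemma hasDerivAt_scaledBeta {z : ℝ} (hz : z ∈ Ioo 0 1) :
    HasDerivAt scaledBeta ((2 * z - (1 + z ^ 2) * logRatio z) / (4 * z ^ 2)) z := by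
  have hz0 : z ≠ 0 := hz.1.ne'
  have hz2 : 1 - z ^ 2 ≠ 0 := by nlinarith [hz.1, hz.2]
  have hd := ((hasDerivAt_pow 2 z).const_sub 1).mul (hasDerivAt_scaledBetaH hz)
  refine hd.congr_deriv ?_
  rw [scaledBetaH]
  field_simp
  ring

lemma strictMonoOn_scaledBetaH : StrictMonoOn scaledBetaH (Ioo 0 1) := by
  refine strictMonoOn_of_hasDerivWithinAt_pos (convex_Ioo 0 1)
    (fun z hz => (hasDerivAt_scaledBetaH hz).continuousAt.continuousWithinAt)
    (fun z hz => (hasDerivAt_scaledBetaH (interior_subset hz)).hasDerivWithinAt) fun z hz => ?_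
  rw [interior_Ioo] at hz
  have := logRatio_lt hz
  have := hz.1
  apply div_pos <;> [linarith; positivity]

lemma strictAntiOn_scaledBeta : StrictAntiOn scaledBeta (Ioo 0 1) := by
  refine strictAntiOn_of_hasDerivWithinAt_neg (convex_Ioo 0 1)
    (fun z hz => (hasDerivAt_scaledBeta hz).continuousAt.continuousWithinAt)
    (fun z hz => (hasDerivAt_scaledBeta (interior_subset hz)).hasDerivWithinAt) fun z hz => ?_
  rw [interior_Ioo] at hz
  have := two_mul_lt_logRatio hz
  have := hz.1
  apply div_neg_of_neg_of_pos _ (by positivity)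
  nlinarith [sq_nonneg z]

lemma half_lt_scaledBetaH {z : ℝ} (hz : z ∈ Ioo 0 1) : 1 / 2 < scaledBetaH z := by
  have := two_mul_lt_logRatio hz
  rw [scaledBetaH, lt_div_iff₀ (by linarith [hz.1])]
  linarith

lemma scaledBeta_mem_Ioo {z : ℝ} (hz : z ∈ Ioo 0 1) : scaledBeta z ∈ Ioo 0 (1 / 2) := by
  have h1 : 0 < 1 - z ^ 2 := by nlinarith [hz.1, hz.2]
  have hL := logRatio_lt hz
  rw [lt_div_iff₀ h1] at hL
  refine ⟨mul_pos h1 (by linarith [half_lt_scaledBetaH hz]), ?_⟩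
  rw [scaledBeta, scaledBetaH, mul_div_assoc', div_lt_iff₀ (by linarith [hz.1])]
  linarith

lemma tendsto_scaledBetaH_nhdsGT_zero : Tendsto scaledBetaH (𝓝[>] 0) (𝓝 (1 / 2)) := by
  have hslope := (hasDerivAt_logRatio (z := 0) (by norm_num)).tendsto_slope_zero_right.div_const 4
  have hL0 : logRatio 0 = 0 := by simp [logRatio]
  convert hslope using 2 with z
  · rw [scaledBetaH, zero_add, hL0, sub_zero, smul_eq_mul]
    ring
  · norm_num

lemma tendsto_scaledBetaH_nhdsLT_one : Tendsto scaledBetaH (𝓝[<] 1) atTop := by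
  have hsub : Tendsto (fun z : ℝ => 1 - z) (𝓝[<] 1) (𝓝[>] 0) := by
    simpa using (continuous_sub_left (1 : ℝ)).continuousWithinAt.tendsto_nhdsWithin
      (x := 1) (s := Iio 1) (t := Ioi 0) fun z hz => sub_pos.2 hz
  have hlog := (tendsto_neg_atBot_atTop.comp (tendsto_log_nhdsGT_zero.comp hsub)).atTop_div_const
    (show (0 : ℝ) < 4 by norm_num)
  refine tendsto_atTop_mono' _ ?_ hlog
  filter_upwards [Ioo_mem_nhdsLT (show (0 : ℝ) < 1 by norm_num)] with z hz
  have hlog1 : 0 ≤ log (1 + z) := log_nonneg (by linarith [hz.1])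
  have hL : 0 ≤ logRatio z := (two_mul_lt_logRatio hz).le.trans' (by linarith [hz.1])
  calc -log (1 - z) / 4 ≤ logRatio z / 4 := by rw [logRatio]; linarith
    _ ≤ logRatio z / (4 * z) :=
      div_le_div_of_nonneg_left hL (by linarith [hz.1]) (by linarith [hz.2])

lemma tendsto_scaledBeta_nhdsGT_zero : Tendsto scaledBeta (𝓝[>] 0) (𝓝 (1 / 2)) := by
  have hsq : Tendsto (fun z : ℝ => 1 - z ^ 2) (𝓝[>] 0) (𝓝 1) :=
    ((continuous_const.sub (continuous_pow 2)).tendsto' 0 1 (by norm_num)).mono_left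
      nhdsWithin_le_nhds
  have := hsq.mul tendsto_scaledBetaH_nhdsGT_zero
  rwa [one_mul] at this

lemma tendsto_scaledBeta_nhdsLT_one : Tendsto scaledBeta (𝓝[<] 1) (𝓝 0) := by
  -- the `1 - z` factor tames `log (1 - z)`, since `x log x → 0`
  have hform : scaledBeta =
      fun z => (1 + z) / (4 * z) * ((1 - z) * log (1 + z) - (1 - z) * log (1 - z)) := by
    ext z; rw [scaledBeta, scaledBetaH, logRatio]; ring
  have hcont : ContinuousAt scaledBeta 1 := by
    rw [hform]
    refine ContinuousAt.mul ?_ ?_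
    · exact continuousAt_id.const_add 1 |>.div (continuousAt_id.const_mul 4) (by norm_num)
    · exact ((continuousAt_const.sub continuousAt_id).mul
        ((continuousAt_const.add continuousAt_id).log (by norm_num))).sub
        (continuous_mul_log.comp (continuous_sub_left 1)).continuousAt
  simpa [scaledBeta] using hcont.tendsto.mono_left nhdsWithin_le_nhds

lemma surjOn_scaledBeta : SurjOn scaledBeta (Ioo 0 1) (Ioo 0 (1 / 2)) :=
  ContinuousOn.surjOn_Ioo_of_tendsto one_pos
    (fun _ hz => (hasDerivAt_scaledBeta hz).continuousAt.continuousWithinAt)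
    tendsto_scaledBeta_nhdsGT_zero tendsto_scaledBeta_nhdsLT_one

noncomputable def scaledBetaInv : ℝ → ℝ := Function.invFunOn scaledBeta (Ioo 0 1)

lemma mapsTo_scaledBetaInv : MapsTo scaledBetaInv (Ioo 0 (1 / 2)) (Ioo 0 1) :=
  surjOn_scaledBeta.mapsTo_invFunOn

lemma rightInvOn_scaledBetaInv : RightInvOn scaledBetaInv scaledBeta (Ioo 0 (1 / 2)) :=
  surjOn_scaledBeta.rightInvOn_invFunOn

noncomputable def scaledBetaHOf (c : ℝ) : ℝ := scaledBetaH (scaledBetaInv c)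

lemma half_lt_scaledBetaHOf {c : ℝ} (hc : c ∈ Ioo 0 (1 / 2)) : 1 / 2 < scaledBetaHOf c :=
  half_lt_scaledBetaH (mapsTo_scaledBetaInv hc)

lemma strictAntiOn_scaledBetaHOf : StrictAntiOn scaledBetaHOf (Ioo 0 (1 / 2)) :=
  strictMonoOn_scaledBetaH.comp_strictAntiOn
    (strictAntiOn_scaledBeta.of_rightInvOn mapsTo_scaledBetaInv rightInvOn_scaledBetaInv)
    mapsTo_scaledBetaInv

lemma tendsto_scaledBetaHOf_nhdsGT_zero : Tendsto scaledBetaHOf (𝓝[>] 0) atTop :=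
  tendsto_scaledBetaH_nhdsLT_one.comp <| strictAntiOn_scaledBeta.tendsto_nhdsGT_of_rightInvOn
    (fun _ => scaledBeta_mem_Ioo) mapsTo_scaledBetaInv rightInvOn_scaledBetaInv one_pos

lemma tendsto_scaledBetaHOf_nhdsLT_half : Tendsto scaledBetaHOf (𝓝[<] (1 / 2)) (𝓝 (1 / 2)) :=
  tendsto_scaledBetaH_nhdsGT_zero.comp <| strictAntiOn_scaledBeta.tendsto_nhdsLT_of_rightInvOn
    (fun _ => scaledBeta_mem_Ioo) mapsTo_scaledBetaInv rightInvOn_scaledBetaInv one_pos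

lemma scaledBetaH_div_eq {b β W : ℝ} (hb : 0 < b) (hW : W ∈ Ioo 0 b)
    (h : exp (-(4 * b * β * W)) = (b - W) / (b + W)) : scaledBetaH (W / b) = β * b ^ 2 := by
  have hbW : 0 < b - W := sub_pos.2 hW.2
  have hbW' : 0 < b + W := by linarith [hW.1]
  have hlog : log (b + W) - log (b - W) = 4 * b * β * W := by
    have := congrArg log h
    rw [log_exp, log_div hbW.ne' hbW'.ne'] at this
    linarith
  have hL : logRatio (W / b) = 4 * b * β * W := by
    rw [logRatio, ← hlog, one_add_div hb.ne', one_sub_div hb.ne', log_div hbW'.ne' hb.ne',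
      log_div hbW.ne' hb.ne', add_comm b W]
    ring
  rw [scaledBetaH, hL]
  field_simp [hW.1.ne']

lemma mul_sq_sub_sq_eq_scaledBeta {b β W : ℝ} (hb : b ≠ 0)
    (h : scaledBetaH (W / b) = β * b ^ 2) : β * (b ^ 2 - W ^ 2) = scaledBeta (W / b) := by
  rw [scaledBeta, h]
  field_simp

lemma eq_mul_sq_sub_sq_iff {b β W c : ℝ} (hb : 0 < b) (hW : W ∈ Ioo 0 b)
    (h : exp (-(4 * b * β * W)) = (b - W) / (b + W)) (hc : c ∈ Ioo 0 (1 / 2)) :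
    c = β * (b ^ 2 - W ^ 2) ↔ β = scaledBetaHOf c / b ^ 2 := by
  have hz : W / b ∈ Ioo 0 1 := ⟨div_pos hW.1 hb, (div_lt_one hb).2 hW.2⟩
  have hβ := scaledBetaH_div_eq hb hW h
  rw [mul_sq_sub_sq_eq_scaledBeta hb.ne' hβ, eq_div_iff (by positivity), ← hβ, scaledBetaHOf,
    strictMonoOn_scaledBetaH.eq_iff_eq hz (mapsTo_scaledBetaInv hc),
    ← strictAntiOn_scaledBeta.eq_iff_eq (mapsTo_scaledBetaInv hc) hz, rightInvOn_scaledBetaInv hc]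

theorem betaH_existence (b : ℝ) (hb : 0 < b)
    (WH : ℝ → ℝ)
    (hWH : ∀ β' : ℝ, 1 / (2 * b ^ 2) < β' →
      WH β' ∈ Ioo 0 b ∧
      Real.exp (-(4 * b * β' * WH β')) = (b - WH β') / (b + WH β')) :
    ∃ βH : ℝ → ℝ,
      (∀ β ∈ Ioo (0 : ℝ) (1 / (2 * b ^ 2)),
        βH β ∈ Ioi (1 / (2 * b ^ 2)) ∧
        β * b ^ 2 = βH β * (b ^ 2 - (WH (βH β)) ^ 2) ∧
        (∀ β' ∈ Ioi (1 / (2 * b ^ 2)),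
          β * b ^ 2 = β' * (b ^ 2 - (WH β') ^ 2) → β' = βH β)) ∧
      StrictAntiOn βH (Ioo (0 : ℝ) (1 / (2 * b ^ 2))) ∧
      Tendsto βH (nhdsWithin 0 (Ioi 0)) atTop ∧
      Tendsto βH (nhdsWithin (1 / (2 * b ^ 2)) (Iio (1 / (2 * b ^ 2))))
        (nhds (1 / (2 * b ^ 2))) := by
  have hb2 : 0 < b ^ 2 := by positivity
  have hcrit : 1 / (2 * b ^ 2) * b ^ 2 = 1 / 2 := by field_simp
  have hscale : MapsTo (· * b ^ 2) (Ioo 0 (1 / (2 * b ^ 2))) (Ioo 0 (1 / 2)) :=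
    fun β hβ => ⟨mul_pos hβ.1 hb2, hcrit ▸ mul_lt_mul_of_pos_right hβ.2 hb2⟩
  refine ⟨fun β => scaledBetaHOf (β * b ^ 2) / b ^ 2, fun β hβ => ?_, ?_, ?_, ?_⟩
  · have hgt : 1 / (2 * b ^ 2) < scaledBetaHOf (β * b ^ 2) / b ^ 2 := by
      rw [lt_div_iff₀ hb2, hcrit]
      exact half_lt_scaledBetaHOf (hscale hβ)
    refine ⟨hgt, (eq_mul_sq_sub_sq_iff hb (hWH _ hgt).1 (hWH _ hgt).2 (hscale hβ)).2 rfl,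
      fun β' hβ' => (eq_mul_sq_sub_sq_iff hb (hWH β' hβ').1 (hWH β' hβ').2 (hscale hβ)).1⟩
  · exact fun β₁ h₁ β₂ h₂ hlt => div_lt_div_of_pos_right (strictAntiOn_scaledBetaHOf
      (hscale h₁) (hscale h₂) (mul_lt_mul_of_pos_right hlt hb2)) hb2
  · have hβb : Tendsto (· * b ^ 2) (𝓝[>] 0) (𝓝[>] 0) := tendsto_nhdsWithin_iff.2
      ⟨((continuous_mul_const _).tendsto' 0 0 (zero_mul _)).mono_left nhdsWithin_le_nhds,
        eventually_nhdsWithin_of_forall fun β hβ => mul_pos hβ hb2⟩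
    exact (tendsto_scaledBetaHOf_nhdsGT_zero.comp hβb).atTop_div_const hb2
  · have hβb : Tendsto (· * b ^ 2) (𝓝[<] (1 / (2 * b ^ 2))) (𝓝[<] (1 / 2)) :=
      tendsto_nhdsWithin_iff.2
        ⟨((continuous_mul_const _).tendsto' _ _ hcrit).mono_left nhdsWithin_le_nhds,
          eventually_nhdsWithin_of_forall fun β hβ => hcrit ▸ mul_lt_mul_of_pos_right hβ hb2⟩
    have := (tendsto_scaledBetaHOf_nhdsLT_half.comp hβb).div_const (b ^ 2)
    rwa [div_div] at this
end
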